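/- Let t, k, v be integers with k ≥ 2t, t ≥ 2, v ≥ 2; set η = C(k,t) and ρ = C(k,t) − C(k−t,t). If η·v^t·log(v^t/(v^t−1))/ρ ≤ v^t, then CAN(t,k,v) ≤ (log(C(k,t)) + t·log v + log log(v^t/(v^t−1)) + 2)/log(v^t/(v^t−1)) − η/ρ. (LLL-based two-stage bound.) -/

import Mathlib

open scoped Classical

/-- `A` is a covering array of strength `t`. -/
def IsCoveringArray {N k v : ℕ} (t : ℕ) (A : Fin N → Fin k → Fin v) : Prop :=
  ∀ c : Fin t → Fin k, Function.Injective c → ∀ a : Fin t → Fin v,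
    ∃ r : Fin N, ∀ i : Fin t, A r (c i) = a i

/-- `CAN t k v` is the minimum number of rows of a covering array `CA(N; t, k, v)`. -/
noncomputable def CAN (t k v : ℕ) : ℕ :=
  sInf {N : ℕ | ∃ A : Fin N → Fin k → Fin v, IsCoveringArray t A}

/-!
The bound follows from a first-moment argument. Put `V = v^t`, `η = C(k,t)` and
`L = log (V/(V-1))`. The two constant rows `0…0` and `1…1` cover two of the `V` patterns on
every `t`-set of columns, leaving `η(V-2)` interactions; each of these is missed by `j` independent
uniform rows with probability `(1 - 1/V)^j = e^{-jL}`, so some choice of the rows leaves at most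
`η(V-2)e^{-jL}` of them, and one further row per leftover interaction completes a covering array.
With `j = ⌈log(η(V-2)L)/L⌉` the total `2 + j + η(V-2)e^{-jL}` is at most the stated bound:
the rounding of `j` costs at most `L`, which `log (V/(V-2)) ≥ 2L + L^2` absorbs, and the
hypothesis says exactly that `η/ρ ≤ 1/L`.
-/

open Finset

section Analysis

open Real

lemma add_exp_neg_le_one_add_sq {x : ℝ} (hx₀ : 0 ≤ x) (hx₁ : x ≤ 1) :
    x + exp (-x) ≤ 1 + x ^ 2 := by
  have h := abs_exp_sub_one_sub_id_le (x := -x) (by rwa [abs_neg, abs_of_nonneg hx₀])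
  linarith [(abs_le.mp h).2, neg_sq x]

lemma exists_nat_add_mul_exp_neg_le {N L : ℝ} (hL : 0 < L) (hL₁ : L ≤ 1) (hNL : 1 ≤ N * L) :
    ∃ j : ℕ, j + N * exp (-(j * L)) ≤ (log (N * L) + 1 + L ^ 2) / L := by
  have hN : 0 < N := pos_of_mul_pos_left (by linarith) hL.le
  set J := log (N * L) / L
  have hJ : 0 ≤ J := div_nonneg (log_nonneg hNL) hL.le
  refine ⟨⌈J⌉₊, ?_⟩
  set δ := (⌈J⌉₊ : ℝ) - J
  have hδ₀ : 0 ≤ δ := sub_nonneg.2 (Nat.le_ceil J)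
  have hδ₁ : δ ≤ 1 := by linarith [Nat.ceil_lt_add_one hJ]
  have hjL : (⌈J⌉₊ : ℝ) * L = log (N * L) + δ * L := by
    simp only [δ, J]; field_simp; ring
  -- `J` minimises `x ↦ x + N e^{-xL}` over the reals, with `N e^{-JL} = 1/L`.
  have hterm : N * exp (-(⌈J⌉₊ * L)) * L = exp (-(δ * L)) := by
    rw [hjL, neg_add, exp_add, exp_neg (log _), exp_log (by positivity)]
    field_simp
  have hδL : δ * L ≤ L := by nlinarith
  have key := add_exp_neg_le_one_add_sq (mul_nonneg hδ₀ hL.le) (hδL.trans hL₁)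
  rw [le_div_iff₀ hL, add_mul, hterm, hjL]
  nlinarith [mul_nonneg hδ₀ hL.le]

lemma inv_le_log_div_sub_one {V : ℝ} (hV : 1 < V) : V⁻¹ ≤ log (V / (V - 1)) := by
  have h := one_sub_inv_le_log_of_pos (x := V / (V - 1)) (by apply div_pos <;> linarith)
  rwa [inv_div, one_sub_div (by linarith), sub_sub_cancel, one_div] at h

lemma log_div_sub_one_le_inv {V : ℝ} (hV : 1 < V) : log (V / (V - 1)) ≤ (V - 1)⁻¹ := by
  have h := log_le_sub_one_of_pos (x := V / (V - 1)) (by apply div_pos <;> linarith)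
  rwa [div_sub_one (by linarith), sub_sub_cancel, one_div] at h

lemma two_mul_log_add_sq_le_log {V : ℝ} (hV : 2 < V) :
    2 * log (V / (V - 1)) + log (V / (V - 1)) ^ 2 ≤ log (V / (V - 2)) := by
  set L := log (V / (V - 1))
  have hL₀ : 0 ≤ L := (inv_pos.2 (by linarith)).le.trans (inv_le_log_div_sub_one (by linarith))
  have hsq : L ^ 2 ≤ ((V - 1) ^ 2)⁻¹ := by
    rw [← inv_pow]; exact pow_le_pow_left₀ hL₀ (log_div_sub_one_le_inv (by linarith)) 2
  have hsplit : log (V / (V - 2)) = 2 * L + log ((V - 1) ^ 2 / (V * (V - 2))) := by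
    have h1 : V / (V - 1) ≠ 0 := div_ne_zero (by linarith) (by linarith)
    have h2 : (V - 1) ^ 2 / (V * (V - 2)) ≠ 0 :=
      div_ne_zero (pow_ne_zero _ (by linarith)) (mul_ne_zero (by linarith) (by linarith))
    rw [two_mul, ← log_mul h1 h1, ← log_mul (mul_ne_zero h1 h1) h2]
    congr 1
    have : V - 1 ≠ 0 := by linarith
    have : V - 2 ≠ 0 := by linarith
    field_simp
  have hgain := one_sub_inv_le_log_of_pos (x := (V - 1) ^ 2 / (V * (V - 2)))
    (div_pos (by nlinarith) (by nlinarith))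
  have : 1 - ((V - 1) ^ 2 / (V * (V - 2)))⁻¹ = ((V - 1) ^ 2)⁻¹ := by
    have : V - 1 ≠ 0 := by linarith
    have : V - 2 ≠ 0 := by linarith
    field_simp; ring
  linarith

lemma exists_two_add_mul_pow_le {η ρ V : ℝ} (hV : 4 ≤ V) (hη : 2 ≤ η) (hρ : 0 < ρ)
    (h : η * log (V / (V - 1)) ≤ ρ) :
    ∃ j : ℕ, 2 + j + η * (V - 2) * (1 - V⁻¹) ^ j ≤
      (log η + log V + log (log (V / (V - 1))) + 2) / log (V / (V - 1)) - η / ρ := by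
  set L := log (V / (V - 1))
  have hL₀ : V⁻¹ ≤ L := inv_le_log_div_sub_one (by linarith)
  have hL : 0 < L := (inv_pos.2 (by linarith)).trans_le hL₀
  have hL₁ : L ≤ 1 :=
    (log_div_sub_one_le_inv (by linarith)).trans (inv_le_one_of_one_le₀ (by linarith))
  have hN : 0 < η * (V - 2) := by nlinarith
  have hNL : 1 ≤ η * (V - 2) * L := by
    calc (1 : ℝ) = 2 * (V / 2) * V⁻¹ := by field_simp
      _ ≤ η * (V - 2) * L :=
        mul_le_mul (mul_le_mul hη (by linarith) (by linarith) (by linarith)) hL₀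
          (by positivity) hN.le
  obtain ⟨j, hj⟩ := exists_nat_add_mul_exp_neg_le hL hL₁ hNL
  have hbase : (1 - V⁻¹) ^ j = exp (-(j * L)) := by
    rw [neg_mul_eq_mul_neg, exp_nat_mul, exp_neg, exp_log (by apply div_pos <;> linarith)]
    field_simp
  have hηρ : η / ρ ≤ 1 / L := by rw [div_le_div_iff₀ hρ hL]; linarith
  have hlog : log (η * (V - 2) * L) = log η + log V + log L - log (V / (V - 2)) := by
    rw [log_mul hN.ne' hL.ne', log_mul (by positivity) (by linarith),
      log_div (by linarith) (by linarith)]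
    ring
  have hgain : 2 * L + L ^ 2 ≤ log (V / (V - 2)) := two_mul_log_add_sq_le_log (by linarith)
  refine ⟨j, ?_⟩
  rw [hbase]
  calc 2 + j + η * (V - 2) * exp (-(j * L))
      ≤ 2 + (log (η * (V - 2) * L) + 1 + L ^ 2) / L := by linarith
    _ = (log η + log V + log L + 1 - (log (V / (V - 2)) - (2 * L + L ^ 2))) / L := by
        rw [hlog]; field_simp; ring
    _ ≤ (log η + log V + log L + 1) / L :=
        div_le_div_of_nonneg_right (by linarith) hL.le
    _ ≤ (log η + log V + log L + 2) / L - η / ρ := by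
        rw [show (log η + log V + log L + 2) / L = (log η + log V + log L + 1) / L + 1 / L by ring]
        linarith

end Analysis

theorem Nat.choose_lt_choose_of_lt {a b c : ℕ} (hab : a < b) (hc : 0 < c) (hcb : c ≤ b) :
    a.choose c < b.choose c := by
  obtain ⟨b, rfl⟩ : ∃ b', b = b' + 1 := ⟨b - 1, by omega⟩
  obtain ⟨c, rfl⟩ : ∃ c', c = c' + 1 := ⟨c - 1, by omega⟩
  rw [Nat.choose_succ_succ']
  have := Nat.choose_pos (show c ≤ b by omega)
  have := Nat.choose_le_choose (c + 1) (show a ≤ b by omega)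
  omega

theorem exists_card_filter_le_of_card_filter_le {Ω ι : Type*} [Fintype Ω] [Nonempty Ω]
    (T : Finset ι) (P : Ω → ι → Prop) [∀ ω i, Decidable (P ω i)] {p : ℝ}
    (hp : ∀ i ∈ T, (#{ω | P ω i} : ℝ) ≤ p * Fintype.card Ω) :
    ∃ ω, (#{i ∈ T | P ω i} : ℝ) ≤ p * #T := by
  have hsum : ∑ ω, (#{i ∈ T | P ω i} : ℝ) ≤ ∑ _ω : Ω, p * #T := by
    have := sum_card_bipartiteAbove_eq_sum_card_bipartiteBelow (s := univ) (t := T) (r := P)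
    simp only [bipartiteAbove, bipartiteBelow] at this
    rw [← Nat.cast_sum, this, Nat.cast_sum, sum_const, card_univ, nsmul_eq_mul]
    calc ∑ i ∈ T, (#{ω | P ω i} : ℝ) ≤ ∑ _i ∈ T, p * Fintype.card Ω := sum_le_sum hp
      _ = Fintype.card Ω * (p * #T) := by rw [sum_const, nsmul_eq_mul]; ring
  obtain ⟨ω, -, hω⟩ := exists_le_of_sum_le univ_nonempty hsum
  exact ⟨ω, hω⟩

/-- An interaction prescribes the symbols `I.2` on the set of columns `I.1`. -/
abbrev Interaction (α β : Type*) := Σ S : Finset α, (S → β)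

namespace Interaction

variable {α β : Type*}

def CoveredBy (I : Interaction α β) (f : α → β) : Prop := ∀ x : I.1, f x = I.2 x

instance [Fintype α] [DecidableEq β] (I : Interaction α β) (f : α → β) :
    Decidable (I.CoveredBy f) := by
  unfold CoveredBy; infer_instance

def extend [DecidableEq α] (I : Interaction α β) (b : β) : α → β :=
  fun x => if h : x ∈ I.1 then I.2 ⟨x, h⟩ else b

theorem coveredBy_extend [DecidableEq α] (I : Interaction α β) (b : β) :
    I.CoveredBy (I.extend b) :=
  fun x => dif_pos x.2

variable [Fintype α] [DecidableEq α] [Fintype β] [DecidableEq β]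

theorem card_coveredBy (I : Interaction α β) :
    #{f | I.CoveredBy f} = Fintype.card β ^ (Fintype.card α - #I.1) := by
  have : ({f | I.CoveredBy f} : Finset (α → β)) =
      Fintype.piFinset fun x => if h : x ∈ I.1 then {I.2 ⟨x, h⟩} else univ := by
    ext f
    rw [mem_filter, Fintype.mem_piFinset]
    simp only [mem_univ, true_and, CoveredBy]
    refine ⟨fun hf x => ?_, fun hf x => by simpa [x.2] using hf x⟩
    split_ifs with h
    · exact mem_singleton.2 (hf ⟨x, h⟩)
    · exact mem_univ _
  rw [this, Fintype.card_piFinset]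
  simp only [apply_dite card, card_singleton, card_univ]
  rw [prod_dite, prod_const_one, one_mul, prod_const, card_univ, Fintype.card_coe,
    filter_notMem_eq_sdiff, card_univ_sdiff]

theorem card_not_coveredBy [Nonempty β] (I : Interaction α β) :
    (#{f | ¬ I.CoveredBy f} : ℝ) =
      (1 - ((Fintype.card β : ℝ) ^ #I.1)⁻¹) * Fintype.card (α → β) := by
  have hS : #I.1 ≤ Fintype.card α := card_le_univ _
  have hβ : (0 : ℝ) < Fintype.card β := by exact_mod_cast Fintype.card_pos
  rw [filter_not, card_sdiff_of_subset (filter_subset _ _), card_univ, card_coveredBy,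
    Fintype.card_fun, Nat.cast_sub (Nat.pow_le_pow_right Fintype.card_pos (Nat.sub_le _ _))]
  push_cast
  rw [← Nat.sub_add_cancel hS, pow_add, Nat.add_sub_cancel]
  field_simp

theorem exists_rows_card_uncovered_le [Nonempty β] (T : Finset (Interaction α β)) {t : ℕ}
    (hT : ∀ I ∈ T, #I.1 = t) (j : ℕ) :
    ∃ ω : Fin j → α → β, (#{I ∈ T | ∀ r, ¬ I.CoveredBy (ω r)} : ℝ) ≤
      (1 - ((Fintype.card β : ℝ) ^ t)⁻¹) ^ j * #T := by
  refine exists_card_filter_le_of_card_filter_le T _ fun I hI => le_of_eq ?_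
  have : ({ω | ∀ r, ¬ I.CoveredBy (ω r)} : Finset (Fin j → α → β)) =
      Fintype.piFinset fun _ => {f | ¬ I.CoveredBy f} := by
    ext ω; simp
  rw [this, Fintype.card_piFinset_const, Nat.cast_pow, card_not_coveredBy, hT I hI,
    Fintype.card_pi_const, Nat.cast_pow, mul_pow]


def uncoveredByConst (t : ℕ) (b₀ b₁ : β) : Finset (Interaction α β) :=
  (powersetCard t univ).sigma fun _ => univ \ {fun _ => b₀, fun _ => b₁}

theorem card_eq_of_mem_uncoveredByConst {t : ℕ} {b₀ b₁ : β} {I : Interaction α β}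
    (hI : I ∈ uncoveredByConst t b₀ b₁) : #I.1 = t :=
  (mem_powersetCard.1 (mem_sigma.1 hI).1).2

theorem coveredBy_const_of_notMem_uncoveredByConst {t : ℕ} {b₀ b₁ : β} {I : Interaction α β}
    (ht : #I.1 = t) (hI : I ∉ uncoveredByConst t b₀ b₁) :
    I.CoveredBy (fun _ => b₀) ∨ I.CoveredBy (fun _ => b₁) := by
  simp only [uncoveredByConst, mem_sigma, mem_powersetCard_univ, ht, mem_sdiff, mem_univ,
    true_and, mem_insert, mem_singleton, not_not] at hI
  rcases hI with h | h
  · exact .inl fun x => by simp [h]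
  · exact .inr fun x => by simp [h]

theorem card_uncoveredByConst {t : ℕ} (ht : 0 < t) {b₀ b₁ : β} (hb : b₀ ≠ b₁) :
    #(uncoveredByConst (α := α) t b₀ b₁) =
      (Fintype.card α).choose t * (Fintype.card β ^ t - 2) := by
  rw [uncoveredByConst, card_sigma, ← card_univ (α := α), ← card_powersetCard, ← smul_eq_mul,
    ← sum_const]
  refine sum_congr rfl fun S hS => ?_
  obtain ⟨-, hSt⟩ := mem_powersetCard.1 hS
  obtain ⟨x, hx⟩ := card_pos.1 (hSt ▸ ht)
  have hne : (fun _ : S => b₀) ≠ fun _ => b₁ := fun h => hb (congrFun h ⟨x, hx⟩)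
  rw [card_univ_sdiff, card_pair hne, Fintype.card_fun, Fintype.card_coe, hSt]

end Interaction

open Interaction

theorem CAN_le_card_of_forall_coveredBy {t k v : ℕ} {ι : Type*} [Fintype ι]
    (A : ι → Fin k → Fin v)
    (hA : ∀ I : Interaction (Fin k) (Fin v), #I.1 = t → ∃ r, I.CoveredBy (A r)) :
    CAN t k v ≤ Fintype.card ι := by
  refine Nat.sInf_le ⟨fun r => A ((Fintype.equivFin ι).symm r), fun c hc a => ?_⟩
  obtain ⟨r, hr⟩ := hA ⟨univ.map ⟨c, hc⟩,
    fun x => a ((Equiv.ofInjective c hc).symm ⟨x, by simpa using mem_map.1 x.2⟩)⟩ (by simp)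
  refine ⟨Fintype.equivFin ι r, fun i => ?_⟩
  simpa using hr ⟨c i, by simp⟩

theorem CAN_le_two_add_add_card_uncovered {t k v j : ℕ} {b₀ b₁ : Fin v}
    (ω : Fin j → Fin k → Fin v) :
    CAN t k v ≤
      2 + j + #{I ∈ uncoveredByConst (α := Fin k) t b₀ b₁ | ∀ r, ¬ I.CoveredBy (ω r)} := by
  set U := {I ∈ uncoveredByConst (α := Fin k) t b₀ b₁ | ∀ r, ¬ I.CoveredBy (ω r)}
  have hrows := CAN_le_card_of_forall_coveredBy (t := t)
    (Sum.elim ![fun _ => b₀, fun _ => b₁] (Sum.elim ω fun I : U => I.1.extend b₀)) fun I hI => by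
      by_cases hIT : I ∈ uncoveredByConst t b₀ b₁
      · by_cases hIU : I ∈ U
        · exact ⟨.inr (.inr ⟨I, hIU⟩), I.coveredBy_extend b₀⟩
        · obtain ⟨r, hr⟩ : ∃ r, I.CoveredBy (ω r) := by simpa [U, hIT] using hIU
          exact ⟨.inr (.inl r), hr⟩
      · rcases coveredBy_const_of_notMem_uncoveredByConst hI hIT with h | h
        · exact ⟨.inl 0, h⟩
        · exact ⟨.inl 1, h⟩
  simpa [add_assoc] using hrows

theorem CAN_le_two_add_choose_mul_pow {t k v : ℕ} (ht : 0 < t) (hv : 2 ≤ v) (j : ℕ) :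
    (CAN t k v : ℝ) ≤ 2 + j + k.choose t * ((v : ℝ) ^ t - 2) * (1 - ((v : ℝ) ^ t)⁻¹) ^ j := by
  let b₀ : Fin v := ⟨0, by omega⟩
  let b₁ : Fin v := ⟨1, by omega⟩
  have hb : b₀ ≠ b₁ := by simp [b₀, b₁, Fin.ext_iff]
  have : Nonempty (Fin v) := ⟨b₀⟩
  obtain ⟨ω, hω⟩ := exists_rows_card_uncovered_le (uncoveredByConst (α := Fin k) t b₀ b₁)
    (fun _ => card_eq_of_mem_uncoveredByConst) j
  have hcard :
      (#(uncoveredByConst (α := Fin k) t b₀ b₁) : ℝ) = k.choose t * ((v : ℝ) ^ t - 2) := by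
    have hv2 : 2 ≤ v ^ t := le_self_pow₀ (by omega) ht.ne' |>.trans' hv
    rw [card_uncoveredByConst ht hb, Fintype.card_fin, Fintype.card_fin]
    push_cast [Nat.cast_sub hv2]
    rfl
  rw [Fintype.card_fin, hcard] at hω
  have hCAN := CAN_le_two_add_add_card_uncovered (t := t) (b₀ := b₀) (b₁ := b₁) ω
  calc (CAN t k v : ℝ) ≤ 2 + j + #{I ∈ uncoveredByConst t b₀ b₁ | ∀ r, ¬ I.CoveredBy (ω r)} := by
        exact_mod_cast hCAN
    _ ≤ _ := by linarith

/-- LLL-based two-stage bound. With `η = C(k,t)` and `ρ = C(k,t) − C(k−t,t)`, if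
`η·v^t·log(v^t/(v^t−1))/ρ ≤ v^t`, then
`CAN(t,k,v) ≤ (log C(k,t) + t log v + log log (v^t/(v^t−1)) + 2)/log(v^t/(v^t−1)) − η/ρ`. -/
theorem lll_two_stage_bound (t k v : ℕ) (ht : 2 ≤ t) (hk : 2 * t ≤ k) (hv : 2 ≤ v)
    (h : (k.choose t : ℝ) * (v : ℝ) ^ t *
          Real.log ((v : ℝ) ^ t / ((v : ℝ) ^ t - 1)) /
        ((k.choose t : ℝ) - ((k - t).choose t : ℝ)) ≤ (v : ℝ) ^ t) :
    (CAN t k v : ℝ) ≤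
      (Real.log (k.choose t) + t * Real.log v +
          Real.log (Real.log ((v : ℝ) ^ t / ((v : ℝ) ^ t - 1))) + 2) /
        Real.log ((v : ℝ) ^ t / ((v : ℝ) ^ t - 1)) -
      (k.choose t : ℝ) / ((k.choose t : ℝ) - ((k - t).choose t : ℝ)) := by
  have ht₀ : 0 < t := by omega
  have hV : (4 : ℝ) ≤ (v : ℝ) ^ t := by
    have : 2 ^ 2 ≤ v ^ t := (Nat.pow_le_pow_right two_pos ht).trans (Nat.pow_le_pow_left hv t)
    exact_mod_cast this
  have hlt : (k - t).choose t < k.choose t := Nat.choose_lt_choose_of_lt (by omega) ht₀ (by omega)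
  have hη : (2 : ℝ) ≤ k.choose t := by
    have := Nat.choose_pos (show t ≤ k - t by omega)
    exact_mod_cast (show 2 ≤ k.choose t by omega)
  have hρ : (0 : ℝ) < k.choose t - (k - t).choose t := sub_pos.2 (by exact_mod_cast hlt)
  have hηL : (k.choose t : ℝ) * Real.log ((v : ℝ) ^ t / ((v : ℝ) ^ t - 1)) ≤
      k.choose t - (k - t).choose t := by
    rw [div_le_iff₀ hρ] at h
    nlinarith
  obtain ⟨j, hj⟩ := exists_two_add_mul_pow_le hV hη hρ hηL
  rw [← Real.log_pow]
  exact (CAN_le_two_add_choose_mul_pow ht₀ hv j).trans hj
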